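/- Let f : (ℝ^d)^{n−1} × ℝ^d → ℝ be in F_n(C,ε), even in the last variable for each fixed first argument and such that g^y : x ↦ f(x,y) is even and in F_{n−1}(C,ε) for every y ∈ ℝ^d. Define φ : ℝ^d → ℝ by e^{−φ(y)} = E[e^{−f(X̃, y)}] where X̃ is a standard Gaussian vector on (ℝ^d)^{n−1}. If E[e^{−g^y(X̃)}] · E[e^{H(g^y)(X̃)}] ≤ A for every y ∈ ℝ^d, then for every y ∈ ℝ^d, E[e^{Hf(X̃, y)}] ≤ e^{Hφ(y)} · A. -/

import Mathlib

/-!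
Fix `y` and a shift `v` of the last variable. Restricting the infimum that defines `Hf(x, y)` to
the perturbations with last component `v` gives `Hf(x, y) ≤ H(g^{y+v})(x) + |v|²/2`. Integrating
against the Gaussian and using `E[e^{-g^{y+v}}] = e^{-φ(y+v)}` in the hypothesis on `A` yields
`E[e^{Hf(X̃, y)}] ≤ e^{φ(y+v) + |v|²/2} A`, and optimising over `v` gives `e^{Hφ(y)} A`.
-/

open MeasureTheory Real

/-- The standard Gaussian probability measure on `ℝ^d`. -/
noncomputable def stdGauss (d : ℕ) : Measure (EuclideanSpace ℝ (Fin d)) :=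
  volume.withDensity fun x =>
    ENNReal.ofReal ((2 * π) ^ (-(d : ℝ) / 2) * Real.exp (-‖x‖ ^ 2 / 2))

/-- The quadratic infimum convolution `Hψ(x) = inf_y ( ψ(x+y) + |y|²/2 )`. -/
noncomputable def Hconv {E : Type*} [NormedAddCommGroup E] (ψ : E → ℝ) (x : E) : ℝ :=
  ⨅ y : E, (ψ (x + y) + ‖y‖ ^ 2 / 2)

/-- The quadratic infimum convolution on `(ℝ^d)^m ≅ ℝ^{md}`. -/
noncomputable def Hn {d m : ℕ} (g : (Fin m → EuclideanSpace ℝ (Fin d)) → ℝ)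
    (x : Fin m → EuclideanSpace ℝ (Fin d)) : ℝ :=
  ⨅ w : Fin m → EuclideanSpace ℝ (Fin d), (g (x + w) + (∑ i, ‖w i‖ ^ 2) / 2)

/-- The quadratic infimum convolution on the full product `(ℝ^d)^m × ℝ^d`:
`Hf(x,y) = inf_{(u,v)} ( f(x+u, y+v) + ½(∑|uᵢ|² + |v|²) )`. -/
noncomputable def H2n {d m : ℕ}
    (f : (Fin m → EuclideanSpace ℝ (Fin d)) → EuclideanSpace ℝ (Fin d) → ℝ)
    (x : Fin m → EuclideanSpace ℝ (Fin d)) (y : EuclideanSpace ℝ (Fin d)) : ℝ :=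
  ⨅ p : (Fin m → EuclideanSpace ℝ (Fin d)) × EuclideanSpace ℝ (Fin d),
    (f (x + p.1) (y + p.2) + ((∑ i, ‖p.1 i‖ ^ 2) + ‖p.2‖ ^ 2) / 2)

/-- The class `F(C,ε)`: functions that are `Cε`-Lipschitz and satisfy
`f(x+h) + f(x-h) - 2f(x) ≤ Cε²|h|²` for all `x, h`. -/
def memF {E : Type*} [NormedAddCommGroup E] (C ε : ℝ) (f : E → ℝ) : Prop :=
  LipschitzWith (C * ε).toNNReal f ∧
    ∀ x h : E, f (x + h) + f (x - h) - 2 * f x ≤ C * ε ^ 2 * ‖h‖ ^ 2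

/-- The class `F_m(C,ε)` of functions on `(ℝ^d)^m`: functions belonging to `F(C,ε)`
with respect to each `ℝ^d`-coordinate block separately. -/
def memFn {d m : ℕ} (C ε : ℝ) (f : (Fin m → EuclideanSpace ℝ (Fin d)) → ℝ) : Prop :=
  ∀ (i : Fin m) (x : Fin m → EuclideanSpace ℝ (Fin d)),
    memF C ε fun y => f (Function.update x i y)

open scoped NNReal

section InfConv

variable {E : Type*} [SeminormedAddCommGroup E]

/-- `Hn g` and `H2n f · ·` are, definitionally, infimal convolutions with quadratic costs. -/
noncomputable def infConv (q g : E → ℝ) (x : E) : ℝ :=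
  ⨅ w, g (x + w) + q w

theorem bddBelow_range_infConv {q g : E → ℝ} {K : ℝ≥0} (hg : LipschitzWith K g)
    (hq : ∀ w, ‖w‖ ^ 2 / 2 ≤ q w) (x : E) :
    BddBelow (Set.range fun w => g (x + w) + q w) := by
  refine ⟨g x - K ^ 2 / 2, ?_⟩
  rintro _ ⟨w, rfl⟩
  have hlip : g x - K * ‖w‖ ≤ g (x + w) := by
    have := hg.dist_le_mul (x + w) x
    rw [Real.dist_eq, dist_eq_norm, add_sub_cancel_left] at this
    linarith [neg_abs_le (g (x + w) - g x)]
  nlinarith [hq w, sq_nonneg (‖w‖ - K)]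

theorem LipschitzWith.infConv {q g : E → ℝ} {K : ℝ≥0} (hg : LipschitzWith K g)
    (hq : ∀ w, ‖w‖ ^ 2 / 2 ≤ q w) : LipschitzWith K (infConv q g) := by
  refine LipschitzWith.of_le_add_mul K fun x z => ?_
  rw [← sub_le_iff_le_add]
  refine le_ciInf fun w => ?_
  have hshift : g (x + w) ≤ g (z + w) + K * dist x z := by
    simpa only [dist_add_right] using hg.le_add_mul (x + w) (z + w)
  have hle : _root_.infConv q g x ≤ g (x + w) + q w :=
    ciInf_le (bddBelow_range_infConv hg hq x) w
  linarith

end InfConv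

theorem sq_norm_le_sum_sq_norm {ι : Type*} [Fintype ι] {F : ι → Type*}
    [∀ i, SeminormedAddCommGroup (F i)] (w : ∀ i, F i) : ‖w‖ ^ 2 ≤ ∑ i, ‖w i‖ ^ 2 := by
  refine (Real.le_sqrt (norm_nonneg _) (by positivity)).1
    ((pi_norm_le_iff_of_nonneg (Real.sqrt_nonneg _)).2 fun i => Real.le_sqrt_of_sq_le ?_)
  exact Finset.single_le_sum (f := fun i => ‖w i‖ ^ 2) (fun _ _ => by positivity)
    (Finset.mem_univ i)

theorem norm_le_sum_norm {ι : Type*} [Fintype ι] {F : ι → Type*}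
    [∀ i, SeminormedAddCommGroup (F i)] (w : ∀ i, F i) : ‖w‖ ≤ ∑ i, ‖w i‖ :=
  (pi_norm_le_iff_of_nonneg (Finset.sum_nonneg fun _ _ => norm_nonneg _)).2 fun i =>
    Finset.single_le_sum (f := fun i => ‖w i‖) (fun _ _ => norm_nonneg _) (Finset.mem_univ i)

theorem LipschitzWith.of_forall_update {ι : Type*} [Fintype ι] [DecidableEq ι]
    {F : ι → Type*} [∀ i, PseudoMetricSpace (F i)] {α : Type*} [PseudoMetricSpace α]
    {g : (∀ i, F i) → α} {K : ℝ≥0}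
    (hg : ∀ i x, LipschitzWith K fun y => g (Function.update x i y)) :
    LipschitzWith (Fintype.card ι * K) g := by
  have telescope : ∀ s : Finset ι, ∀ x z, (∀ i ∉ s, x i = z i) →
      dist (g x) (g z) ≤ K * ∑ i ∈ s, dist (x i) (z i) := by
    intro s
    induction s using Finset.induction with
    | empty =>
      intro x z hxz
      simp [funext fun i => hxz i (Finset.notMem_empty i)]
    | insert j s hj ih =>
      intro x z hxz
      let x' := Function.update x j (z j)
      have hx'x : ∀ i ∈ s, x' i = x i := fun i hi =>
        Function.update_of_ne (ne_of_mem_of_not_mem hi hj) _ _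
      have hstep : dist (g x) (g x') ≤ K * dist (x j) (z j) := by
        simpa [x'] using (hg j x).dist_le_mul (x j) (z j)
      have hrest : dist (g x') (g z) ≤ K * ∑ i ∈ s, dist (x i) (z i) := by
        rw [← Finset.sum_congr rfl fun i hi => congrArg (dist · (z i)) (hx'x i hi)]
        refine ih x' z fun i hi => ?_
        by_cases hij : i = j
        · subst hij; simp [x']
        · simpa [x', hij] using hxz i (by simp [hij, hi])
      rw [Finset.sum_insert hj, mul_add]
      exact (dist_triangle _ _ _).trans (add_le_add hstep hrest)
  refine LipschitzWith.of_dist_le_mul fun x z => ?_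
  calc dist (g x) (g z) ≤ K * ∑ i, dist (x i) (z i) :=
        telescope Finset.univ x z fun i hi => absurd (Finset.mem_univ i) hi
    _ ≤ K * ∑ _i : ι, dist x z := by gcongr with i; exact dist_le_pi_dist x z i
    _ = ↑(Fintype.card ι * K) * dist x z := by
      rw [Finset.sum_const, Finset.card_univ, nsmul_eq_mul]; push_cast; ring

theorem le_exp_iInf_mul {ι : Sort*} [Nonempty ι] {I A : ℝ} {c : ι → ℝ} (hA : 0 ≤ A)
    (h : ∀ i, I ≤ Real.exp (c i) * A) : I ≤ Real.exp (⨅ i, c i) * A := by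
  rcases le_or_gt I 0 with hI | hI
  · exact hI.trans (by positivity)
  have hA' : 0 < A :=
    pos_of_mul_pos_right (hI.trans_le (h (Classical.arbitrary ι))) (by positivity)
  rw [← div_le_iff₀ hA', ← Real.log_le_iff_le_exp (div_pos hI hA')]
  exact le_ciInf fun i => (Real.log_le_iff_le_exp (div_pos hI hA')).2 ((div_le_iff₀ hA').2 (h i))

theorem integrable_exp_neg_mul_sq_norm {V : Type*} [NormedAddCommGroup V] [InnerProductSpace ℝ V]
    [FiniteDimensional ℝ V] [MeasurableSpace V] [BorelSpace V] {b : ℝ} (hb : 0 < b) :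
    Integrable fun v : V => Real.exp (-b * ‖v‖ ^ 2) := by
  have h := (GaussianFourier.integrable_cexp_neg_mul_sq_norm_add (V := V) (b := (b : ℂ))
    (by simpa using hb) 0 0).norm
  convert h using 2 with v
  rw [Complex.norm_exp]
  norm_cast
  simp

theorem integrable_exp_mul_norm_stdGauss (d : ℕ) (c : ℝ) :
    Integrable (fun x : EuclideanSpace ℝ (Fin d) => Real.exp (c * ‖x‖)) (stdGauss d) := by
  set k : ℝ := (2 * π) ^ (-(d : ℝ) / 2)
  have hk : 0 ≤ k := by positivity
  have hdens : Continuous fun x : EuclideanSpace ℝ (Fin d) => k * Real.exp (-‖x‖ ^ 2 / 2) := by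
    fun_prop
  rw [stdGauss, integrable_withDensity_iff hdens.measurable.ennreal_ofReal
    (ae_of_all _ fun _ => ENNReal.ofReal_lt_top)]
  simp_rw [ENNReal.toReal_ofReal (mul_nonneg hk (Real.exp_pos _).le)]
  refine ((integrable_exp_neg_mul_sq_norm (b := 1 / 4) (by norm_num)).const_mul
    (Real.exp (c ^ 2) * k)).mono' (by fun_prop) (ae_of_all _ fun x => ?_)
  have hexp : Real.exp (c * ‖x‖) * Real.exp (-‖x‖ ^ 2 / 2) ≤
      Real.exp (c ^ 2) * Real.exp (-(1 / 4) * ‖x‖ ^ 2) := by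
    rw [← Real.exp_add, ← Real.exp_add, Real.exp_le_exp]
    nlinarith [sq_nonneg (‖x‖ / 2 - c)]
  rw [Real.norm_of_nonneg (by positivity)]
  calc Real.exp (c * ‖x‖) * (k * Real.exp (-‖x‖ ^ 2 / 2))
      = k * (Real.exp (c * ‖x‖) * Real.exp (-‖x‖ ^ 2 / 2)) := by ring
    _ ≤ k * (Real.exp (c ^ 2) * Real.exp (-(1 / 4) * ‖x‖ ^ 2)) := by gcongr
    _ = Real.exp (c ^ 2) * k * Real.exp (-(1 / 4) * ‖x‖ ^ 2) := by ring

instance (d : ℕ) : SigmaFinite (stdGauss d) :=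
  SigmaFinite.withDensity_ofReal _

theorem integrable_exp_of_lipschitzWith {ι : Type*} [Fintype ι] {d : ℕ}
    {g : (ι → EuclideanSpace ℝ (Fin d)) → ℝ} {K : ℝ≥0} (hg : LipschitzWith K g) :
    Integrable (fun x => Real.exp (g x)) (Measure.pi fun _ : ι => stdGauss d) := by
  have hprod := (Integrable.fintype_prod (μ := fun _ : ι => stdGauss d)
    fun _ => integrable_exp_mul_norm_stdGauss d K).const_mul (Real.exp (g 0))
  refine hprod.mono' (hg.continuous.rexp).aestronglyMeasurable (ae_of_all _ fun x => ?_)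
  have hgrowth : g x ≤ g 0 + K * ∑ i, ‖x i‖ := by
    have := hg.le_add_mul x 0
    rw [dist_zero_right] at this
    exact this.trans (by gcongr; exact norm_le_sum_norm x)
  rw [Real.norm_of_nonneg (Real.exp_pos _).le, ← Real.exp_sum, ← Real.exp_add, ← Finset.mul_sum]
  exact Real.exp_le_exp.2 hgrowth

section Quadratic

variable {d m : ℕ}

theorem LipschitzWith.Hn {g : (Fin m → EuclideanSpace ℝ (Fin d)) → ℝ} {K : ℝ≥0}
    (hg : LipschitzWith K g) : LipschitzWith K (Hn g) :=
  hg.infConv fun w => by have := sq_norm_le_sum_sq_norm w; linarith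

variable {f : (Fin m → EuclideanSpace ℝ (Fin d)) → EuclideanSpace ℝ (Fin d) → ℝ}

theorem bddBelow_range_H2n {K₁ K₂ : ℝ≥0} (h₁ : ∀ y, LipschitzWith K₁ fun x => f x y)
    (h₂ : ∀ x, LipschitzWith K₂ (f x)) (x : Fin m → EuclideanSpace ℝ (Fin d))
    (y : EuclideanSpace ℝ (Fin d)) :
    BddBelow (Set.range fun p : (Fin m → EuclideanSpace ℝ (Fin d)) × EuclideanSpace ℝ (Fin d) =>
      f (x + p.1) (y + p.2) + ((∑ i, ‖p.1 i‖ ^ 2) + ‖p.2‖ ^ 2) / 2) := by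
  refine bddBelow_range_infConv (g := Function.uncurry f) (LipschitzWith.uncurry h₁ h₂)
    (fun p => ?_) (x, y)
  have := sq_norm_le_sum_sq_norm p.1
  rw [Prod.norm_def]
  rcases max_cases ‖p.1‖ ‖p.2‖ with ⟨h, -⟩ | ⟨h, -⟩ <;> rw [h] <;> nlinarith [sq_nonneg ‖p.2‖]

theorem H2n_le_Hn_add {x : Fin m → EuclideanSpace ℝ (Fin d)} {y : EuclideanSpace ℝ (Fin d)}
    (hbdd : BddBelow (Set.range fun p : (Fin m → EuclideanSpace ℝ (Fin d)) ×
      EuclideanSpace ℝ (Fin d) => f (x + p.1) (y + p.2) + ((∑ i, ‖p.1 i‖ ^ 2) + ‖p.2‖ ^ 2) / 2))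
    (v : EuclideanSpace ℝ (Fin d)) :
    H2n f x y ≤ Hn (fun x' => f x' (y + v)) x + ‖v‖ ^ 2 / 2 := by
  rw [← sub_le_iff_le_add]
  refine le_ciInf fun u => ?_
  have := ciInf_le hbdd (u, v)
  rw [H2n]
  linarith

end Quadratic

theorem tensorisation_step_general (d m : ℕ) (C ε : ℝ)
    (f : (Fin m → EuclideanSpace ℝ (Fin d)) → EuclideanSpace ℝ (Fin d) → ℝ)
    (hF1 : ∀ y, memFn C ε fun x => f x y)
    (hF2 : ∀ x, memF C ε (f x))
    (φ : EuclideanSpace ℝ (Fin d) → ℝ)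
    (hφ : ∀ y, Real.exp (-φ y) =
      ∫ x, Real.exp (-f x y) ∂Measure.pi fun _ : Fin m => stdGauss d)
    (A : ℝ)
    (hA : ∀ y,
      (∫ x, Real.exp (-f x y) ∂Measure.pi fun _ : Fin m => stdGauss d) *
        (∫ x, Real.exp (Hn (fun x' => f x' y) x)
          ∂Measure.pi fun _ : Fin m => stdGauss d) ≤ A) :
    ∀ y, (∫ x, Real.exp (H2n f x y) ∂Measure.pi fun _ : Fin m => stdGauss d) ≤
      Real.exp (Hconv φ y) * A := by
  intro y
  have hlip₁ (y' : EuclideanSpace ℝ (Fin d)) :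
      LipschitzWith (Fintype.card (Fin m) * (C * ε).toNNReal) fun x => f x y' :=
    LipschitzWith.of_forall_update fun i x => (hF1 y' i x).1
  have hA₀ : 0 ≤ A := (mul_nonneg (integral_nonneg fun _ => (Real.exp_pos _).le)
    (integral_nonneg fun _ => (Real.exp_pos _).le)).trans (hA 0)
  refine le_exp_iInf_mul hA₀ fun v => ?_
  have hHn : (∫ x, Real.exp (Hn (fun x' => f x' (y + v)) x)
      ∂Measure.pi fun _ : Fin m => stdGauss d) ≤ Real.exp (φ (y + v)) * A := by
    rw [← inv_mul_le_iff₀ (Real.exp_pos _), ← Real.exp_neg, hφ]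
    exact hA (y + v)
  calc (∫ x, Real.exp (H2n f x y) ∂Measure.pi fun _ : Fin m => stdGauss d)
      ≤ ∫ x, Real.exp (‖v‖ ^ 2 / 2) * Real.exp (Hn (fun x' => f x' (y + v)) x)
          ∂Measure.pi fun _ : Fin m => stdGauss d := by
        refine integral_mono_of_nonneg (ae_of_all _ fun _ => (Real.exp_pos _).le)
          ((integrable_exp_of_lipschitzWith (hlip₁ (y + v)).Hn).const_mul _)
          (ae_of_all _ fun x => ?_)
        beta_reduce
        rw [← Real.exp_add, Real.exp_le_exp, add_comm]
        exact H2n_le_Hn_add (bddBelow_range_H2n hlip₁ (fun x => (hF2 x).1) x y) v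
    _ ≤ Real.exp (‖v‖ ^ 2 / 2) * (Real.exp (φ (y + v)) * A) := by
        rw [integral_const_mul]
        gcongr
    _ = Real.exp (φ (y + v) + ‖v‖ ^ 2 / 2) * A := by rw [Real.exp_add]; ring

/-- The key step of the tensorisation: with `f ∈ F_n(C,ε)` on `(ℝ^d)^{n-1} × ℝ^d`
(here `m = n − 1`), even in the last variable and with `g^y = f(·,y)` even, if
`φ` satisfies `e^{-φ(y)} = E[e^{-f(X̃,y)}]` and
`E[e^{-g^y(X̃)}] E[e^{H(g^y)(X̃)}] ≤ A` for every `y`, then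
`E[e^{Hf(X̃,y)}] ≤ e^{Hφ(y)} A` for every `y`. -/
theorem tensorisation_step (d m : ℕ) (C ε : ℝ) (hC : 0 < C)
    (hε : ε ∈ Set.Ioc (0 : ℝ) 1)
    (f : (Fin m → EuclideanSpace ℝ (Fin d)) → EuclideanSpace ℝ (Fin d) → ℝ)
    (hF1 : ∀ y, memFn C ε fun x => f x y)
    (hF2 : ∀ x, memF C ε (f x))
    (heven2 : ∀ x y, f x (-y) = f x y)
    (heven1 : ∀ x y, f (-x) y = f x y)
    (φ : EuclideanSpace ℝ (Fin d) → ℝ)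
    (hφ : ∀ y, Real.exp (-φ y) =
      ∫ x, Real.exp (-f x y) ∂Measure.pi fun _ : Fin m => stdGauss d)
    (A : ℝ)
    (hA : ∀ y,
      (∫ x, Real.exp (-f x y) ∂Measure.pi fun _ : Fin m => stdGauss d) *
        (∫ x, Real.exp (Hn (fun x' => f x' y) x)
          ∂Measure.pi fun _ : Fin m => stdGauss d) ≤ A) :
    ∀ y, (∫ x, Real.exp (H2n f x y) ∂Measure.pi fun _ : Fin m => stdGauss d) ≤
      Real.exp (Hconv φ y) * A :=
  tensorisation_step_general d m C ε f hF1 hF2 φ hφ A hA
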